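/- Let N ≥ 4, let x_{ij} ∈ {0,1} for i ≠ j in {1,…,N} encode a directed successor relation forming a union of disjoint directed cycles covering {1,…,N} (each node has out-degree and in-degree exactly 1). If there exist integers u_2,…,u_N such that u_i − u_j + (N−1)x_{ij} ≤ N − 2 for all i,j ∈ {2,…,N} with i ≠ j, then the cycle cover consists of a single cycle through node 1 (i.e., it is a Hamiltonian cycle). -/
import Mathlib


theorem stmt12 (N : ℕ) [NeZero N] (hN : 4 ≤ N) (σ : Equiv.Perm (Fin N))
    (hfix : ∀ i, σ i ≠ i) (u : Fin N → ℤ)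
    (hmtz : ∀ i j : Fin N, i ≠ 0 → j ≠ 0 → i ≠ j →
      u i - u j + ((N : ℤ) - 1) * (if σ i = j then 1 else 0) ≤ (N : ℤ) - 2) :
    ∀ v : Fin N, ∃ m : ℕ, (σ ^ m) 0 = v := by
  intro v
  by_contra h
  push_neg at h
  set n := orderOf σ with hn
  have hnpos : 0 < n := orderOf_pos σ
  have hn1 : σ ^ n = 1 := pow_orderOf_eq_one σ
  have hne : ∀ k : ℕ, (σ ^ k) v ≠ 0 := by
    intro k hk
    apply h (n * (k + 1) - k)
    have hkle : k ≤ n * (k + 1) := by nlinarith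
    have heq : (σ ^ k) ((σ ^ (n * (k + 1) - k)) 0) = (σ ^ (n * (k + 1))) 0 := by
      rw [← Equiv.Perm.mul_apply, ← pow_add]
      congr 2
      omega
    rw [pow_mul, hn1, one_pow] at heq
    simp only [Equiv.Perm.coe_one, id_eq] at heq
    exact (σ ^ k).injective (heq.trans hk.symm)
  have step : ∀ w : Fin N, w ≠ 0 → σ w ≠ 0 → u w + 1 ≤ u (σ w) := by
    intro w hw hsw
    have := hmtz w (σ w) hw hsw (Ne.symm (hfix w))
    simp only [if_pos rfl, if_true, mul_one] at this
    linarith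
  have key : ∀ k : ℕ, u v + k ≤ u ((σ ^ k) v) := by
    intro k
    induction k with
    | zero => simp
    | succ k ih =>
      have h1 := hne k
      have hstep := step ((σ ^ k) v) h1 (by
        have h2 := hne (k + 1)
        rwa [pow_succ', Equiv.Perm.mul_apply] at h2)
      have hrw : (σ ^ (k + 1)) v = σ ((σ ^ k) v) := by
        rw [pow_succ', Equiv.Perm.mul_apply]
      rw [hrw]
      have hc : ((k + 1 : ℕ) : ℤ) = (k : ℤ) + 1 := by push_cast; ring
      rw [hc]
      linarith
  have hfin := key n
  have : (σ ^ n) v = v := by rw [hn1]; rfl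
  rw [this] at hfin
  have : (1 : ℤ) ≤ (n : ℤ) := by exact_mod_cast hnpos
  linarith
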